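/- arXiv:2112.14433 — 2 statements merged into one kernel-verified Lean document; each statement's English description precedes it below -/
import Mathlib

section
/- Let G be an N×E real matrix, let Λ be an E×E symmetric positive-definite real matrix, and let σ² > 0. Then Λ Gᵀ (G Λ Gᵀ + σ² I_N)⁻¹ G Λ = (GᵀG + σ² Λ⁻¹)⁻¹ GᵀG Λ. Consequently, setting α = GᵀG/N, for every Φ ∈ ℝ^E the standard GP posterior variance with degenerate kernel, κ(x,x) − k ᵀ (K + σ² I_N)⁻¹ k where K = G Λ Gᵀ, k = G Λ Φ and κ(x,x) = Φᵀ Λ Φ, equals the distributed-form variance κ(x,x) − Φᵀ (α + (σ²/N) Λ⁻¹)⁻¹ α Λ Φ. -/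
/-!
The posterior covariance `Λ Gᵀ (G Λ Gᵀ + σ² I)⁻¹ G Λ` is rewritten by the push-through identity:
with `A = G Λ Gᵀ + σ² I` and `B = Gᵀ G + σ² Λ⁻¹` one has `B (Λ Gᵀ) = Gᵀ A`, and both `A` and `B`
are positive definite, hence invertible, so `Λ Gᵀ A⁻¹ = B⁻¹ Gᵀ`. The distributed form is the same
expression, since `α + (σ²/N) Λ⁻¹ = B / N` and the factor `1/N` cancels against `α = Gᵀ G / N`.
-/

open Matrix

namespace Matrix

theorem inv_smul_mul_smul {m n K : Type*} [Fintype n] [DecidableEq n] [Field K] {c : K}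
    (hc : c ≠ 0) (A : Matrix n n K) (X : Matrix n m K) : (c • A)⁻¹ * (c • X) = A⁻¹ * X := by
  by_cases hA : IsUnit A.det
  · have : Invertible c := invertibleOfNonzero hc
    rw [Matrix.inv_smul A c hA, Matrix.smul_mul, Matrix.mul_smul, smul_smul, invOf_mul_self,
      one_smul]
  · have hcA : ¬IsUnit (c • A).det := by
      simpa [det_smul, isUnit_iff_ne_zero, hc] using hA
    rw [nonsing_inv_apply_not_isUnit _ hA, nonsing_inv_apply_not_isUnit _ hcA,
      Matrix.zero_mul, Matrix.zero_mul]

variable {m n : Type*} [Fintype m] [Fintype n]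

theorem mul_mul_inv_add_smul_one_eq_inv_add_smul_inv_mul {K : Type*} [CommRing K]
    [DecidableEq m] [DecidableEq n] {Λ : Matrix n n K} (G : Matrix m n K) (U : Matrix n m K)
    (σ : K) (hΛ : IsUnit Λ) (hA : IsUnit (G * Λ * U + σ • 1)) (hB : IsUnit (U * G + σ • Λ⁻¹)) :
    Λ * U * (G * Λ * U + σ • 1)⁻¹ = (U * G + σ • Λ⁻¹)⁻¹ * U := by
  rw [isUnit_iff_isUnit_det] at hΛ hA hB
  have hswap : (U * G + σ • Λ⁻¹) * (Λ * U) = U * (G * Λ * U + σ • 1) := by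
    simp only [Matrix.add_mul, Matrix.mul_add, Matrix.smul_mul, Matrix.mul_smul, Matrix.mul_assoc,
      nonsing_inv_mul_cancel_left _ _ hΛ, Matrix.mul_one]
  calc Λ * U * (G * Λ * U + σ • 1)⁻¹
      = (U * G + σ • Λ⁻¹)⁻¹ * ((U * G + σ • Λ⁻¹) * (Λ * U)) * (G * Λ * U + σ • 1)⁻¹ := by
        rw [nonsing_inv_mul_cancel_left _ _ hB]
    _ = (U * G + σ • Λ⁻¹)⁻¹ * U := by
        rw [hswap, ← Matrix.mul_assoc, mul_nonsing_inv_cancel_right _ _ hA]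

theorem dotProduct_transpose_mul_mul_mulVec {R : Type*} [CommSemiring R] (M : Matrix m n R)
    (A : Matrix m m R) (x : n → R) : x ⬝ᵥ (Mᵀ * A * M) *ᵥ x = (M *ᵥ x) ⬝ᵥ A *ᵥ (M *ᵥ x) := by
  rw [← mulVec_mulVec, ← mulVec_mulVec, dotProduct_transpose_mulVec, dotProduct_comm]

theorem posDef_mul_mul_transpose_add_smul_one [DecidableEq m] {Λ : Matrix n n ℝ}
    (hΛ : Λ.PosSemidef) (G : Matrix m n ℝ) {σ : ℝ} (hσ : 0 < σ) : (G * Λ * Gᵀ + σ • 1).PosDef := by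
  simpa only [conjTranspose_eq_transpose_of_trivial] using
    PosDef.posSemidef_add (hΛ.mul_mul_conjTranspose_same G) (PosDef.one.smul hσ)

theorem posDef_transpose_mul_add_smul_inv [DecidableEq n] {Λ : Matrix n n ℝ} (hΛ : Λ.PosDef)
    (G : Matrix m n ℝ) {σ : ℝ} (hσ : 0 < σ) : (Gᵀ * G + σ • Λ⁻¹).PosDef := by
  simpa only [conjTranspose_eq_transpose_of_trivial] using
    PosDef.posSemidef_add (posSemidef_conjTranspose_mul_self G) (hΛ.inv.smul hσ)

end Matrix

/-- The identity `ΛGᵀ(GΛGᵀ + σ²I)⁻¹GΛ = (GᵀG + σ²Λ⁻¹)⁻¹GᵀGΛ`;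
consequently, with `α = GᵀG/N`, the standard GP posterior variance with the
degenerate kernel equals the distributed-form variance
`κ(x,x) − Φᵀ(α + (σ²/N)Λ⁻¹)⁻¹αΛΦ`. -/
theorem distributed_posterior_variance_eq
    (N E : ℕ) (hN : 0 < N)
    (G : Matrix (Fin N) (Fin E) ℝ)
    (Λ : Matrix (Fin E) (Fin E) ℝ) (hΛ : Λ.PosDef)
    (σ2 : ℝ) (hσ2 : 0 < σ2)
    (α : Matrix (Fin E) (Fin E) ℝ) (hα : α = (1 / (N : ℝ)) • (Gᵀ * G)) :
    Λ * Gᵀ * (G * Λ * Gᵀ + σ2 • (1 : Matrix (Fin N) (Fin N) ℝ))⁻¹ * G * Λ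
      = (Gᵀ * G + σ2 • Λ⁻¹)⁻¹ * (Gᵀ * G) * Λ ∧
    ∀ Φ : Fin E → ℝ,
      Φ ⬝ᵥ Λ *ᵥ Φ
        - ((G * Λ) *ᵥ Φ) ⬝ᵥ
            ((G * Λ * Gᵀ + σ2 • (1 : Matrix (Fin N) (Fin N) ℝ))⁻¹ *ᵥ ((G * Λ) *ᵥ Φ))
      = Φ ⬝ᵥ Λ *ᵥ Φ
        - Φ ⬝ᵥ ((α + (σ2 / (N : ℝ)) • Λ⁻¹)⁻¹ * α * Λ) *ᵥ Φ := by
  have hpush : Λ * Gᵀ * (G * Λ * Gᵀ + σ2 • 1)⁻¹ = (Gᵀ * G + σ2 • Λ⁻¹)⁻¹ * Gᵀ :=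
    mul_mul_inv_add_smul_one_eq_inv_add_smul_inv_mul G Gᵀ σ2 hΛ.isUnit
      (posDef_mul_mul_transpose_add_smul_one hΛ.posSemidef G hσ2).isUnit
      (posDef_transpose_mul_add_smul_inv hΛ G hσ2).isUnit
  have hcov : Λ * Gᵀ * (G * Λ * Gᵀ + σ2 • 1)⁻¹ * G * Λ
      = (Gᵀ * G + σ2 • Λ⁻¹)⁻¹ * (Gᵀ * G) * Λ := by
    rw [hpush, Matrix.mul_assoc _ Gᵀ G]
  refine ⟨hcov, fun Φ => ?_⟩
  have hscale : α + (σ2 / N) • Λ⁻¹ = (1 / (N : ℝ)) • (Gᵀ * G + σ2 • Λ⁻¹) := by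
    rw [hα, smul_add, smul_smul, one_div_mul_eq_div]
  have hsymm : (G * Λ)ᵀ = Λ * Gᵀ := by
    rw [transpose_mul, (isHermitian_iff_isSymm.mp hΛ.isHermitian).eq]
  rw [hscale, hα, inv_smul_mul_smul (one_div_ne_zero (Nat.cast_ne_zero.mpr hN.ne')), ← hcov,
    Matrix.mul_assoc _ G Λ, ← hsymm, dotProduct_transpose_mul_mul_mulVec]
end

section
/- Let α be an E×E symmetric positive-semidefinite real matrix, let Λ be an E×E symmetric positive-definite real matrix, and let c > 0. Then α + cΛ⁻¹ is positive definite, and for every Φ ∈ ℝ^E the distributed posterior variance satisfies the identity Φᵀ Λ Φ − Φᵀ (α + c Λ⁻¹)⁻¹ α Λ Φ = c · Φᵀ (α + c Λ⁻¹)⁻¹ Φ. In particular the posterior variance Σ_E = ΦᵀΛΦ − Φᵀ(α + cΛ⁻¹)⁻¹αΛΦ is nonnegative, and is strictly positive whenever Φ ≠ 0. -/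
/-! With `M = α + cΛ⁻¹`, we have `Λ - M⁻¹αΛ = M⁻¹(M - α)Λ = cM⁻¹`, so the posterior variance is
`c ΦᵀM⁻¹Φ`, and `M⁻¹` is positive definite because `M`, a semidefinite plus a definite matrix, is. -/

open Matrix

variable {n : Type*} [Fintype n] [DecidableEq n]

theorem Matrix.sub_inv_add_smul_inv_mul_mul_eq {R : Type*} [CommRing R]
    {α Λ : Matrix n n R} {c : R} (hM : IsUnit (α + c • Λ⁻¹).det) (hΛ : IsUnit Λ.det) :
    Λ - (α + c • Λ⁻¹)⁻¹ * α * Λ = c • (α + c • Λ⁻¹)⁻¹ := by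
  set M := α + c • Λ⁻¹
  calc Λ - M⁻¹ * α * Λ = M⁻¹ * ((M - α) * Λ) := by
        rw [sub_mul, mul_sub, ← mul_assoc, nonsing_inv_mul _ hM, one_mul, mul_assoc]
    _ = c • M⁻¹ := by
        rw [add_sub_cancel_left, smul_mul_assoc, nonsing_inv_mul _ hΛ, Matrix.mul_smul, mul_one]

theorem Matrix.PosSemidef.posDef_add_smul_inv {K : Type*} [Field K] [PartialOrder K] [StarRing K]
    [StarOrderedRing K]
    {α Λ : Matrix n n K} (hα : α.PosSemidef) (hΛ : Λ.PosDef) {c : K} (hc : 0 < c) :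
    (α + c • Λ⁻¹).PosDef :=
  PosDef.posSemidef_add hα (hΛ.inv.smul hc)

/-- With `α ⪰ 0` symmetric, `Λ ≻ 0` symmetric and `c > 0`, the matrix
`α + cΛ⁻¹` is positive definite, the posterior variance identity
`ΦᵀΛΦ − Φᵀ(α + cΛ⁻¹)⁻¹αΛΦ = c Φᵀ(α + cΛ⁻¹)⁻¹Φ` holds, the posterior variance is
nonnegative, and it is strictly positive whenever `Φ ≠ 0`. -/
theorem posterior_variance_identity_nonneg
    (E : ℕ)
    (α : Matrix (Fin E) (Fin E) ℝ) (hα : α.PosSemidef)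
    (Λ : Matrix (Fin E) (Fin E) ℝ) (hΛ : Λ.PosDef)
    (c : ℝ) (hc : 0 < c) :
    (α + c • Λ⁻¹).PosDef ∧
    ∀ Φ : Fin E → ℝ,
      (Φ ⬝ᵥ Λ *ᵥ Φ - Φ ⬝ᵥ ((α + c • Λ⁻¹)⁻¹ * α * Λ) *ᵥ Φ
          = c * (Φ ⬝ᵥ (α + c • Λ⁻¹)⁻¹ *ᵥ Φ)) ∧
      0 ≤ Φ ⬝ᵥ Λ *ᵥ Φ - Φ ⬝ᵥ ((α + c • Λ⁻¹)⁻¹ * α * Λ) *ᵥ Φ ∧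
      (Φ ≠ 0 → 0 < Φ ⬝ᵥ Λ *ᵥ Φ - Φ ⬝ᵥ ((α + c • Λ⁻¹)⁻¹ * α * Λ) *ᵥ Φ) := by
  have hM : (α + c • Λ⁻¹).PosDef := hα.posDef_add_smul_inv hΛ hc
  have hM_det := (isUnit_iff_isUnit_det _).mp hM.isUnit
  have hΛ_det := (isUnit_iff_isUnit_det _).mp hΛ.isUnit
  have identity (Φ : Fin E → ℝ) : Φ ⬝ᵥ Λ *ᵥ Φ - Φ ⬝ᵥ ((α + c • Λ⁻¹)⁻¹ * α * Λ) *ᵥ Φ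
      = c * (Φ ⬝ᵥ (α + c • Λ⁻¹)⁻¹ *ᵥ Φ) := by
    rw [← dotProduct_sub, ← sub_mulVec, sub_inv_add_smul_inv_mul_mul_eq hM_det hΛ_det,
      smul_mulVec, dotProduct_smul, smul_eq_mul]
  refine ⟨hM, fun Φ => ⟨identity Φ, ?_, fun hΦ => ?_⟩⟩ <;> rw [identity Φ]
  · exact mul_nonneg hc.le (hM.inv.posSemidef.dotProduct_mulVec_nonneg Φ)
  · exact mul_pos hc (hM.inv.dotProduct_mulVec_pos hΦ)
end
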